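/- Under the hypotheses ξ'(1) + h² < ξ''(1) and ξ''(s)^{−1/2} concave on (0,1], with q₀ the unique solution of ξ'(q₀)+h² = q₀ξ''(q₀), L = ξ''(q₀)^{−1/2}, and α as in the full-RSB ansatz, the value of the zero-temperature functional satisfies Q(L,α) = q₀·ξ''(q₀)^{1/2} + ∫_{q₀}¹ ξ''(q)^{1/2} dq. -/

import Mathlib

/-!
Write `ξ s = ∑ γ_p² s^p`. Since `∑ 2^p γ_p² < ∞`, this series and its termwise derivatives
converge on `(-2, 2)`, so `ξ'`, `ξ''`, `ξ'''` are power series with nonnegative coefficients there.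
Hence `ξ'' > 0` on `(0, 1]`, because `ξ''(1) > ξ'(1) + h² ≥ 0`; and `ξ''(0) > 0` as well, for
otherwise `ξ''^{-1/2}` would blow up at `0`, whereas a nonnegative concave function on `(0, 1]`
is bounded near `0`.

On `[q₀, 1]`, `-ξ''^{-1/2}` is an antiderivative of `ξ''' / (2 ξ''^{3/2})`, so
`∫₀^q α = L - ξ''(max q q₀)^{-1/2}`. Consequently `1 / (L - ∫₀^q α) = ξ''(max q q₀)^{1/2}` and
`ξ''(q) ∫₀^q α = L ξ''(max q q₀) - ξ''(max q q₀)^{1/2}`; both integrals over `[0, 1]` split at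
`q₀`, and the equation defining `q₀` turns `(ξ'(q₀) + h²) L` into `q₀ ξ''(q₀)^{1/2}`.
-/

open Set Filter Topology Asymptotics

noncomputable def powSum (a : ℕ → ℝ) (x : ℝ) : ℝ := ∑' p, a p * x ^ p

def derivCoeff (a : ℕ → ℝ) (p : ℕ) : ℝ := (p + 1) * a (p + 1)

section PowSum

variable {a : ℕ → ℝ} {R : ℝ}

theorem summable_mul_pow (ha : ∀ r ∈ Ico 0 R, Summable fun p => |a p| * r ^ p) {x : ℝ}
    (hx : x ∈ Ioo (-R) R) : Summable fun p => a p * x ^ p := by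
  refine Summable.of_norm ?_
  simpa [abs_mul, abs_pow] using ha |x| ⟨abs_nonneg x, abs_lt.2 hx⟩

theorem summable_natCast_mul_abs_mul_pow (ha : ∀ r ∈ Ico 0 R, Summable fun p => |a p| * r ^ p)
    {r : ℝ} (hr : r ∈ Ico 0 R) : Summable fun p : ℕ => (p : ℝ) * |a p| * r ^ p := by
  obtain ⟨r', hrr', hr'R⟩ := exists_between hr.2
  have hlt : ‖r‖ < r' := by rwa [Real.norm_of_nonneg hr.1]
  refine summable_of_isBigO_nat (ha r' ⟨hr.1.trans hrr'.le, hr'R⟩) ?_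
  exact ((isLittleO_pow_const_mul_const_pow_const_pow_of_norm_lt 1 hlt).isBigO.mul
    (isBigO_refl (fun p : ℕ => |a p|) atTop)).congr (fun p => by ring) (fun p => by ring)

theorem summable_abs_derivCoeff_mul_pow (ha : ∀ r ∈ Ico 0 R, Summable fun p => |a p| * r ^ p) :
    ∀ r ∈ Ico 0 R, Summable fun p => |derivCoeff a p| * r ^ p := by
  intro r hr
  obtain ⟨r', hrr', hr'R⟩ := exists_between hr.2
  have hr' : 0 < r' := hr.1.trans_lt hrr'
  refine (((summable_nat_add_iff 1).2 (summable_natCast_mul_abs_mul_pow ha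
    ⟨hr'.le, hr'R⟩)).div_const r').of_nonneg_of_le
    (fun p => mul_nonneg (abs_nonneg _) (pow_nonneg hr.1 _)) (fun p => ?_)
  have hp : (0:ℝ) ≤ p + 1 := by positivity
  calc |derivCoeff a p| * r ^ p = (p + 1) * |a (p + 1)| * r ^ p := by
        rw [derivCoeff, abs_mul, abs_of_nonneg hp]
    _ ≤ (p + 1) * |a (p + 1)| * r' ^ p := by gcongr; exact hr.1
    _ = ((p + 1 : ℕ) : ℝ) * |a (p + 1)| * r' ^ (p + 1) / r' := by
        rw [pow_succ]; push_cast; field_simp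

theorem hasDerivAt_powSum (ha : ∀ r ∈ Ico 0 R, Summable fun p => |a p| * r ^ p) {x : ℝ}
    (hx : x ∈ Ioo (-R) R) : HasDerivAt (powSum a) (powSum (derivCoeff a) x) x := by
  obtain ⟨r, hxr, hrR⟩ := exists_between (abs_lt.2 hx)
  have hr : r ∈ Ico 0 R := ⟨(abs_nonneg x).trans hxr.le, hrR⟩
  have hbound : ∀ p, ∀ y ∈ Ioo (-r) r, ‖a p * (p * y ^ (p - 1))‖ ≤ |a p| * (p * r ^ (p - 1)) := by
    intro p y hy
    rw [Real.norm_eq_abs, abs_mul, abs_mul, Nat.abs_cast, abs_pow]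
    gcongr
    exact (abs_lt.2 hy).le
  have hu : Summable fun p => |a p| * (p * r ^ (p - 1)) := by
    refine (summable_nat_add_iff 1).1 ((summable_abs_derivCoeff_mul_pow ha r hr).congr fun p => ?_)
    rw [derivCoeff, abs_mul, abs_of_nonneg (by positivity : (0:ℝ) ≤ p + 1)]
    push_cast
    ring_nf
  have h0 : (0:ℝ) ∈ Ioo (-r) r := ⟨by linarith [abs_nonneg x], by linarith [abs_nonneg x]⟩
  have hxr' : x ∈ Ioo (-r) r := abs_lt.1 hxr
  have H := hasDerivAt_tsum_of_isPreconnected hu isOpen_Ioo isPreconnected_Ioo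
    (fun p y _ => (hasDerivAt_pow p y).const_mul (a p)) hbound h0
    (summable_mul_pow ha ⟨by linarith [hr.1], by linarith [hr.1]⟩) hxr'
  refine HasDerivAt.congr_deriv (f := powSum a) H ?_
  rw [(hu.of_norm_bounded (hbound · x hxr')).tsum_eq_zero_add]
  simp only [CharP.cast_eq_zero, zero_mul, mul_zero, zero_add, Nat.add_sub_cancel, powSum]
  exact tsum_congr fun p => by rw [derivCoeff]; push_cast; ring

theorem summable_abs_iterate_derivCoeff_mul_pow
    (ha : ∀ r ∈ Ico 0 R, Summable fun p => |a p| * r ^ p) (k : ℕ) :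
    ∀ r ∈ Ico 0 R, Summable fun p => |(derivCoeff^[k] a) p| * r ^ p := by
  induction k with
  | zero => exact ha
  | succ k ih => rw [Function.iterate_succ_apply']; exact summable_abs_derivCoeff_mul_pow ih

theorem eqOn_iterate_deriv_powSum (ha : ∀ r ∈ Ico 0 R, Summable fun p => |a p| * r ^ p)
    (k : ℕ) : EqOn (deriv^[k] (powSum a)) (powSum (derivCoeff^[k] a)) (Ioo (-R) R) := by
  induction k with
  | zero => exact fun _ _ => rfl
  | succ k ih =>
    intro x hx
    rw [Function.iterate_succ_apply', Function.iterate_succ_apply', ih.deriv isOpen_Ioo hx]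
    exact (hasDerivAt_powSum (summable_abs_iterate_derivCoeff_mul_pow ha k) hx).deriv

theorem hasDerivAt_iterate_deriv_powSum (ha : ∀ r ∈ Ico 0 R, Summable fun p => |a p| * r ^ p)
    (k : ℕ) {x : ℝ} (hx : x ∈ Ioo (-R) R) :
    HasDerivAt (deriv^[k] (powSum a)) (deriv^[k + 1] (powSum a) x) x := by
  rw [Function.iterate_succ_apply']
  have hEq := (eqOn_iterate_deriv_powSum ha k).eventuallyEq_of_mem (isOpen_Ioo.mem_nhds hx)
  exact ((hasDerivAt_powSum (summable_abs_iterate_derivCoeff_mul_pow ha k) hx).congr_of_eventuallyEq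
    hEq).differentiableAt.hasDerivAt

theorem iterate_derivCoeff_nonneg (hnn : ∀ p, 0 ≤ a p) (k : ℕ) :
    ∀ p, 0 ≤ (derivCoeff^[k] a) p := by
  induction k with
  | zero => exact hnn
  | succ k ih =>
    intro p
    rw [Function.iterate_succ_apply', derivCoeff]
    exact mul_nonneg (by positivity) (ih _)

theorem powSum_nonneg (hnn : ∀ p, 0 ≤ a p) {x : ℝ} (hx : 0 ≤ x) : 0 ≤ powSum a x :=
  tsum_nonneg fun p => mul_nonneg (hnn p) (pow_nonneg hx p)

theorem powSum_pos (hnn : ∀ p, 0 ≤ a p) {x y : ℝ} (hsum : Summable fun p => a p * x ^ p)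
    (hx : 0 < x) (hy : powSum a y ≠ 0) : 0 < powSum a x := by
  obtain ⟨p, hp⟩ : ∃ p, a p ≠ 0 := by
    by_contra! h
    simp [powSum, h] at hy
  exact (mul_pos ((hnn p).lt_of_ne' hp) (pow_pos hx p)).trans_le
    (hsum.le_tsum p fun q _ => mul_nonneg (hnn q) (pow_nonneg hx.le q))

theorem iterate_deriv_powSum_nonneg (ha : ∀ r ∈ Ico 0 R, Summable fun p => |a p| * r ^ p)
    (hnn : ∀ p, 0 ≤ a p) (k : ℕ) {x : ℝ} (hx : x ∈ Ico 0 R) : 0 ≤ deriv^[k] (powSum a) x := by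
  rw [eqOn_iterate_deriv_powSum ha k ⟨by linarith [hx.1, hx.2], hx.2⟩]
  exact powSum_nonneg (iterate_derivCoeff_nonneg hnn k) hx.1

theorem iterate_deriv_powSum_pos (ha : ∀ r ∈ Ico 0 R, Summable fun p => |a p| * r ^ p)
    (hnn : ∀ p, 0 ≤ a p) (k : ℕ) {x y : ℝ} (hx : x ∈ Ioo 0 R) (hy : y ∈ Ioo (-R) R)
    (hne : deriv^[k] (powSum a) y ≠ 0) : 0 < deriv^[k] (powSum a) x := by
  have hx' : x ∈ Ioo (-R) R := ⟨by linarith [hx.1, hx.2], hx.2⟩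
  rw [eqOn_iterate_deriv_powSum ha k hy] at hne
  rw [eqOn_iterate_deriv_powSum ha k hx']
  exact powSum_pos (iterate_derivCoeff_nonneg hnn k)
    (summable_mul_pow (summable_abs_iterate_derivCoeff_mul_pow ha k) hx') hx.1 hne

end PowSum

theorem ConcaveOn.le_two_mul_apply_half {g : ℝ → ℝ} {b : ℝ} (hg : ConcaveOn ℝ (Ioc 0 b) g)
    (hnn : ∀ s ∈ Ioc 0 b, 0 ≤ g s) {s : ℝ} (hs : s ∈ Ioc 0 (b / 2)) : g s ≤ 2 * g (b / 2) := by
  have hb : 0 < b := by linarith [hs.1, hs.2]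
  have hbs : 0 < b - s := by linarith [hs.2]
  obtain ⟨t, hbt⟩ : ∃ t, b = 2 * t * (b - s) := ⟨b / (2 * (b - s)), by field_simp⟩
  have ht : 1 / 2 ≤ t := by nlinarith [hs.1]
  have ht1 : t ≤ 1 := by nlinarith [hs.2]
  have hcc : t • g s + (1 - t) • g b ≤ g (t • s + (1 - t) • b) :=
    hg.2 ⟨hs.1, by linarith [hs.2]⟩ ⟨hb, le_rfl⟩ (by linarith) (by linarith) (by ring)
  rw [smul_eq_mul, smul_eq_mul, smul_eq_mul, smul_eq_mul,
    show t * s + (1 - t) * b = b / 2 by linarith] at hcc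
  nlinarith [hnn s ⟨hs.1, by linarith [hs.2]⟩, hnn b ⟨hb, le_rfl⟩]

theorem pos_of_concaveOn_inv_sqrt {F : ℝ → ℝ} {b : ℝ} (hb : 0 < b)
    (hF : ContinuousWithinAt F (Ioi 0) 0) (hpos : ∀ s ∈ Ioc 0 b, 0 < F s)
    (hconc : ConcaveOn ℝ (Ioc 0 b) fun s => (√(F s))⁻¹) : 0 < F 0 := by
  by_contra! h0
  have hlim : Tendsto (fun s => (√(F s))⁻¹) (𝓝[>] 0) atTop := by
    refine tendsto_inv_nhdsGT_zero.comp (tendsto_nhdsWithin_iff.2 ⟨?_, ?_⟩)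
    · simpa [Real.sqrt_eq_zero'.2 h0] using hF.sqrt.tendsto
    · filter_upwards [Ioc_mem_nhdsGT hb] with s hs using Real.sqrt_pos.2 (hpos s hs)
  have hbdd : ∀ᶠ s in 𝓝[>] 0, (√(F s))⁻¹ ≤ 2 * (√(F (b / 2)))⁻¹ := by
    filter_upwards [Ioc_mem_nhdsGT (half_pos hb)] with s hs
    exact hconc.le_two_mul_apply_half (fun _ _ => by positivity) hs
  obtain ⟨s, hs, hs'⟩ := (hbdd.and (hlim.eventually_gt_atTop (2 * (√(F (b / 2)))⁻¹))).exists
  linarith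

theorem HasDerivAt.neg_inv_sqrt {g : ℝ → ℝ} {g' x : ℝ} (hg : HasDerivAt g g' x) (hx : 0 < g x) :
    HasDerivAt (fun s => -(√(g s))⁻¹) (g' / (2 * g x ^ ((3:ℝ) / 2))) x := by
  have hsq : √(g x) ≠ 0 := (Real.sqrt_pos.2 hx).ne'
  refine (((Real.hasDerivAt_sqrt hx.ne').comp x hg).inv hsq).neg.congr_deriv ?_
  have h32 : g x ^ ((3:ℝ) / 2) = g x * √(g x) := by
    rw [show (3:ℝ) / 2 = 1 + 1 / 2 by norm_num, Real.rpow_add hx, Real.rpow_one, Real.sqrt_eq_rpow]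
  rw [Function.comp_apply, h32, Real.sq_sqrt hx.le]
  field_simp

theorem intervalIntegral.integral_comp_max {f : ℝ → ℝ} {a b c : ℝ} (hac : a ≤ c) (hcb : c ≤ b)
    (hf : ContinuousOn f (Icc c b)) :
    ∫ x in a..b, f (max x c) = (c - a) * f c + ∫ x in c..b, f x := by
  have hcont : ContinuousOn (fun x => f (max x c)) (Icc a b) :=
    hf.comp (continuous_id.max continuous_const).continuousOn
      fun x hx => ⟨le_max_right _ _, max_le hx.2 hcb⟩
  have hlow : ∫ x in a..c, f (max x c) = ∫ _ in a..c, f c :=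
    integral_congr fun x hx => by
      rw [uIcc_of_le hac] at hx
      simp [max_eq_right hx.2]
  have hhigh : ∫ x in c..b, f (max x c) = ∫ x in c..b, f x :=
    integral_congr fun x hx => by
      rw [uIcc_of_le hcb] at hx
      simp [max_eq_left hx.1]
  rw [← integral_add_adjacent_intervals (b := c)
    (hcont.mono (by rw [uIcc_of_le hac]; exact Icc_subset_Icc_right hcb)).intervalIntegrable
    (hcont.mono (by rw [uIcc_of_le hcb]; exact Icc_subset_Icc_left hac)).intervalIntegrable,
    hlow, hhigh, integral_const, smul_eq_mul]

open MeasureTheory intervalIntegral in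
theorem integral_eq_inv_sqrt_sub_inv_sqrt_max {g g' α : ℝ → ℝ} {a b q₀ q : ℝ}
    (hq₀ : q₀ ∈ Icc a b) (hg : ∀ x ∈ Icc q₀ b, HasDerivAt g (g' x) x)
    (hg' : ContinuousOn g' (Icc q₀ b)) (hpos : ∀ x ∈ Icc q₀ b, 0 < g x)
    (hα : ∀ s ∈ Ico a b, α s = if s < q₀ then 0 else g' s / (2 * g s ^ ((3:ℝ) / 2)))
    (hq : q ∈ Icc a b) :
    ∫ s in a..q, α s = (√(g q₀))⁻¹ - (√(g (max q q₀)))⁻¹ := by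
  set k : ℝ → ℝ := fun s => g' s / (2 * g s ^ ((3:ℝ) / 2))
  have hgc : ContinuousOn g (Icc q₀ b) := fun x hx => (hg x hx).continuousAt.continuousWithinAt
  have hk : ContinuousOn k (Icc q₀ b) :=
    hg'.div (continuousOn_const.mul (hgc.rpow_const fun x hx => Or.inl (hpos x hx).ne'))
      fun x hx => by have := hpos x hx; positivity
  have hψ : ContinuousOn (fun s => -(√(g s))⁻¹) (Icc q₀ b) :=
    (hgc.sqrt.inv₀ fun x hx => (Real.sqrt_pos.2 (hpos x hx)).ne').neg
  have hΦ : ContinuousOn (fun s => -(√(g (max s q₀)))⁻¹) (Icc a q) :=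
    hψ.comp (continuous_id.max continuous_const).continuousOn
      fun x hx => ⟨le_max_right _ _, max_le (hx.2.trans hq.2) hq₀.2⟩
  -- the antiderivative `s ↦ -g(max s q₀)^{-1/2}` is in general only right-differentiable at `q₀`
  have hderiv : ∀ x ∈ Ioo a q, HasDerivWithinAt (fun s => -(√(g (max s q₀)))⁻¹)
      ((Icc q₀ b).indicator k x) (Ioi x) x := by
    intro x hx
    rcases lt_or_ge x q₀ with hxq₀ | hxq₀
    · have hconst : (fun s => -(√(g (max s q₀)))⁻¹) =ᶠ[𝓝 x] fun _ => -(√(g q₀))⁻¹ := by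
        filter_upwards [Iio_mem_nhds hxq₀] with y hy
        rw [max_eq_right hy.le]
      rw [indicator_of_notMem fun h => hxq₀.not_ge h.1]
      exact ((hasDerivAt_const x _).congr_of_eventuallyEq hconst).hasDerivWithinAt
    · have hxI : x ∈ Icc q₀ b := ⟨hxq₀, hx.2.le.trans hq.2⟩
      rw [indicator_of_mem hxI]
      refine ((hg x hxI).neg_inv_sqrt (hpos x hxI)).hasDerivWithinAt.congr (fun y hy => ?_) ?_
      · rw [max_eq_left (hxq₀.trans (le_of_lt hy))]
      · rw [max_eq_left hxq₀]
  have hkint : IntervalIntegrable ((Icc q₀ b).indicator k) volume a q :=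
    ((hk.integrableOn_Icc).integrable_indicator measurableSet_Icc).intervalIntegrable
  have hαk : ∫ s in a..q, α s = ∫ s in a..q, (Icc q₀ b).indicator k s :=
    integral_congr_Ioo_of_le hq.1 fun s hs => by
      rw [hα s ⟨hs.1.le, hs.2.trans_le hq.2⟩]
      split_ifs with h
      · rw [indicator_of_notMem fun h' => h.not_ge h'.1]
      · rw [indicator_of_mem (show s ∈ Icc q₀ b from ⟨not_lt.1 h, hs.2.le.trans hq.2⟩)]
  rw [hαk, integral_eq_sub_of_hasDeriv_right_of_le hq.1 hΦ hderiv hkint, max_eq_right hq₀.1]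
  ring

open intervalIntegral in
theorem fullRSB_functional_eq {ξ₁ ξ₂ ξ₃ α : ℝ → ℝ} {c q₀ L : ℝ} (hq₀ : q₀ ∈ Icc (0:ℝ) 1)
    (hξ₁ : ∀ x ∈ Icc q₀ 1, HasDerivAt ξ₁ (ξ₂ x) x) (hξ₂ : ∀ x ∈ Icc q₀ 1, HasDerivAt ξ₂ (ξ₃ x) x)
    (hξ₃ : ContinuousOn ξ₃ (Icc q₀ 1)) (hpos : ∀ x ∈ Icc q₀ 1, 0 < ξ₂ x)
    (hq₀eq : ξ₁ q₀ + c = q₀ * ξ₂ q₀) (hL : L = (√(ξ₂ q₀))⁻¹)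
    (hα : ∀ s ∈ Ico (0:ℝ) 1, α s = if s < q₀ then 0 else ξ₃ s / (2 * ξ₂ s ^ ((3:ℝ) / 2))) :
    (1 / 2) * ((ξ₁ 1 + c) * L - (∫ q in (0:ℝ)..1, ξ₂ q * ∫ s in (0:ℝ)..q, α s)
      + ∫ q in (0:ℝ)..1, 1 / (L - ∫ s in (0:ℝ)..q, α s))
      = q₀ * √(ξ₂ q₀) + ∫ q in q₀..1, √(ξ₂ q) := by
  have hA : ∀ q ∈ Icc (0:ℝ) 1, ∫ s in (0:ℝ)..q, α s = L - (√(ξ₂ (max q q₀)))⁻¹ :=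
    fun q hq => hL ▸ integral_eq_inv_sqrt_sub_inv_sqrt_max hq₀ hξ₂ hξ₃ hpos hα hq
  have hLq₀ : L * ξ₂ q₀ = √(ξ₂ q₀) := by rw [hL, inv_mul_eq_div, Real.div_sqrt]
  have hu01 : uIcc (0:ℝ) 1 = Icc 0 1 := uIcc_of_le zero_le_one
  have hu : uIcc q₀ 1 = Icc q₀ 1 := uIcc_of_le hq₀.2
  have hξ₂c : ContinuousOn ξ₂ (Icc q₀ 1) :=
    fun x hx => (hξ₂ x hx).continuousAt.continuousWithinAt
  have hT : ∫ q in (0:ℝ)..1, 1 / (L - ∫ s in (0:ℝ)..q, α s)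
      = q₀ * √(ξ₂ q₀) + ∫ q in q₀..1, √(ξ₂ q) := by
    rw [integral_congr (g := fun q => √(ξ₂ (max q q₀))) fun q hq => ?_,
      integral_comp_max hq₀.1 hq₀.2 hξ₂c.sqrt, sub_zero]
    rw [hu01] at hq
    simp only [hA q hq, sub_sub_cancel, one_div, inv_inv]
  have hH : ContinuousOn (fun q => L * ξ₂ q - √(ξ₂ q)) (Icc q₀ 1) :=
    (continuousOn_const.mul hξ₂c).sub hξ₂c.sqrt
  -- for `q < q₀` both sides vanish, as `L = ξ₂(q₀)^{-1/2}`
  have hmid : ∀ q ∈ Icc (0:ℝ) 1,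
      ξ₂ q * (∫ s in (0:ℝ)..q, α s) = L * ξ₂ (max q q₀) - √(ξ₂ (max q q₀)) := by
    intro q hq
    rw [hA q hq]
    rcases le_total q q₀ with h | h
    · rw [max_eq_right h, ← hL, hLq₀]
      ring
    · rw [max_eq_left h, mul_sub, mul_comm, ← div_eq_mul_inv, Real.div_sqrt]
  have hS : ∫ q in (0:ℝ)..1, ξ₂ q * ∫ s in (0:ℝ)..q, α s
      = L * (ξ₁ 1 - ξ₁ q₀) - ∫ q in q₀..1, √(ξ₂ q) := by
    rw [integral_congr fun q hq => hmid q (hu01 ▸ hq),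
      integral_comp_max hq₀.1 hq₀.2 hH, hLq₀,
      sub_self, mul_zero, zero_add,
      integral_sub (f := fun q => L * ξ₂ q)
        ((continuousOn_const.mul hξ₂c).intervalIntegrable_of_Icc hq₀.2)
        (hξ₂c.sqrt.intervalIntegrable_of_Icc hq₀.2), integral_const_mul,
      integral_eq_sub_of_hasDerivAt (fun x hx => hξ₁ x (hu ▸ hx))
        (hξ₂c.intervalIntegrable_of_Icc hq₀.2)]
  have hc : (ξ₁ q₀ + c) * L = q₀ * √(ξ₂ q₀) := by rw [hq₀eq, mul_assoc, mul_comm (ξ₂ q₀), hLq₀]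
  rw [hS, hT]
  linear_combination (1 / 2 : ℝ) * hc

theorem stmt_9_general (γ : ℕ → ℝ)
    (hsum : Summable fun p => 2 ^ p * γ p ^ 2) (h : ℝ)
    (ξ : ℝ → ℝ) (hξ : ∀ s : ℝ, ξ s = ∑' p : ℕ, γ p ^ 2 * s ^ p)
    (hlow : deriv ξ 1 + h ^ 2 < deriv (deriv ξ) 1)
    (hconc : ConcaveOn ℝ (Set.Ioc 0 1) fun s => (Real.sqrt (deriv (deriv ξ) s))⁻¹)
    (q₀ : ℝ) (hq₀ : q₀ ∈ Set.Icc (0:ℝ) 1)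
    (hq₀eq : deriv ξ q₀ + h ^ 2 = q₀ * deriv (deriv ξ) q₀)
    (L : ℝ) (hL : L = (Real.sqrt (deriv (deriv ξ) q₀))⁻¹)
    (α : ℝ → ℝ)
    (hα : ∀ s ∈ Set.Ico (0:ℝ) 1, α s =
      if s < q₀ then 0
      else deriv (deriv (deriv ξ)) s / (2 * (deriv (deriv ξ) s) ^ ((3:ℝ) / 2))) :
    (1 / 2) * ((deriv ξ 1 + h ^ 2) * L
      - (∫ q in (0:ℝ)..1, deriv (deriv ξ) q * ∫ s in (0:ℝ)..q, α s)
      + ∫ q in (0:ℝ)..1, 1 / (L - ∫ s in (0:ℝ)..q, α s))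
      = q₀ * Real.sqrt (deriv (deriv ξ) q₀) + ∫ q in q₀..1, Real.sqrt (deriv (deriv ξ) q) := by
  obtain rfl : ξ = powSum fun p => γ p ^ 2 := funext hξ
  set ξ := powSum fun p => γ p ^ 2
  have ha : ∀ r ∈ Ico (0:ℝ) 2, Summable fun p => |γ p ^ 2| * r ^ p := fun r hr =>
    hsum.of_nonneg_of_le (fun p => mul_nonneg (abs_nonneg _) (pow_nonneg hr.1 _)) fun p => by
      rw [abs_of_nonneg (sq_nonneg _), mul_comm]
      gcongr
      exacts [hr.1, hr.2.le]
  have hnn : ∀ p, 0 ≤ γ p ^ 2 := fun p => sq_nonneg _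
  have hd : ∀ k, ∀ x ∈ Icc (0:ℝ) 1, HasDerivAt (deriv^[k] ξ) (deriv^[k + 1] ξ x) x :=
    fun k x hx => hasDerivAt_iterate_deriv_powSum ha k ⟨by linarith [hx.1], by linarith [hx.2]⟩
  have hξ''1 : 0 < deriv (deriv ξ) 1 := by
    have : 0 ≤ deriv ξ 1 := iterate_deriv_powSum_nonneg ha hnn 1 ⟨zero_le_one, one_lt_two⟩
    nlinarith [sq_nonneg h]
  have hξ''pos : ∀ s ∈ Ioc (0:ℝ) 1, 0 < deriv (deriv ξ) s := fun s hs =>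
    iterate_deriv_powSum_pos ha hnn 2 ⟨hs.1, by linarith [hs.2]⟩ ⟨by norm_num, by norm_num⟩
      hξ''1.ne'
  have hpos : ∀ x ∈ Icc q₀ 1, 0 < deriv (deriv ξ) x := by
    intro x hx
    rcases (hq₀.1.trans hx.1).eq_or_lt with rfl | hx0
    · exact pos_of_concaveOn_inv_sqrt one_pos
        (hd 2 0 ⟨le_rfl, zero_le_one⟩).continuousAt.continuousWithinAt hξ''pos hconc
    · exact hξ''pos x ⟨hx0, hx.2⟩
  have hsub : Icc q₀ 1 ⊆ Icc 0 1 := Icc_subset_Icc_left hq₀.1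
  exact fullRSB_functional_eq hq₀ (fun x hx => hd 1 x (hsub hx)) (fun x hx => hd 2 x (hsub hx))
    (fun x hx => (hd 3 x (hsub hx)).continuousAt.continuousWithinAt) hpos hq₀eq hL hα

theorem stmt_9 (γ : ℕ → ℝ) (hγ : ∀ p, 0 ≤ γ p) (hγ0 : γ 0 = 0) (hγ1 : γ 1 = 0)
    (hsum : Summable fun p => 2 ^ p * γ p ^ 2) (h : ℝ)
    (ξ : ℝ → ℝ) (hξ : ∀ s : ℝ, ξ s = ∑' p : ℕ, γ p ^ 2 * s ^ p)
    (hlow : deriv ξ 1 + h ^ 2 < deriv (deriv ξ) 1)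
    (hconc : ConcaveOn ℝ (Set.Ioc 0 1) fun s => (Real.sqrt (deriv (deriv ξ) s))⁻¹)
    (q₀ : ℝ) (hq₀ : q₀ ∈ Set.Icc (0:ℝ) 1)
    (hq₀eq : deriv ξ q₀ + h ^ 2 = q₀ * deriv (deriv ξ) q₀)
    (L : ℝ) (hL : L = (Real.sqrt (deriv (deriv ξ) q₀))⁻¹)
    (α : ℝ → ℝ)
    (hα : ∀ s ∈ Set.Ico (0:ℝ) 1, α s =
      if s < q₀ then 0
      else deriv (deriv (deriv ξ)) s / (2 * (deriv (deriv ξ) s) ^ ((3:ℝ) / 2))) :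
    (1 / 2) * ((deriv ξ 1 + h ^ 2) * L
      - (∫ q in (0:ℝ)..1, deriv (deriv ξ) q * ∫ s in (0:ℝ)..q, α s)
      + ∫ q in (0:ℝ)..1, 1 / (L - ∫ s in (0:ℝ)..q, α s))
      = q₀ * Real.sqrt (deriv (deriv ξ) q₀) + ∫ q in q₀..1, Real.sqrt (deriv (deriv ξ) q) :=
  stmt_9_general γ hsum h ξ hξ hlow hconc q₀ hq₀ hq₀eq L hL α hα
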